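/- arXiv:1910.03988 — 2 statements merged into one kernel-verified Lean document; each statement's English description precedes it below -/
import Mathlib

section
/- Let ε ∈ ℂ, let B, C : ℝ → ℂ, let g : ℝ → ℝ be twice differentiable, let f : ℝ → ℂ be twice differentiable, and let ψ : ℝ → ℂ be twice differentiable and satisfy ε ψ''(y) = B(y) ψ(y) for all y ∈ ℝ. Suppose that for all x ∈ ℝ: B(g(x)) · g'(x)² = C(x) and 2 f'(x) g'(x) + f(x) g''(x) = 0. Then the function φ(x) := f(x) · ψ(g(x)) satisfies −ε φ''(x) + C(x) φ(x) = −ε f''(x) ψ(g(x)) for all x ∈ ℝ. -/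
/-! By the Leibniz and chain rules,
`φ'' = f'' ψ(g) + (2 f' g' + f g'') ψ'(g) + f g'² ψ''(g)`.
The amplitude equation kills the middle term, and the equation for `ψ` together with the phase
equation turns `ε f g'² ψ''(g)` into `f B(g) g'² ψ(g) = C φ`. -/

theorem HasDerivAt.comp_real {ψ : ℝ → ℂ} {g : ℝ → ℝ} {ψ' : ℂ} {g' y : ℝ}
    (hψ : HasDerivAt ψ ψ' (g y)) (hg : HasDerivAt g g' y) :
    HasDerivAt (fun t => ψ (g t)) (g' * ψ') y := by
  have h := hψ.scomp y hg
  rwa [Complex.real_smul] at h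

theorem deriv_mul_comp_real {f ψ : ℝ → ℂ} {g : ℝ → ℝ}
    (hf : Differentiable ℝ f) (hψ : Differentiable ℝ ψ) (hg : Differentiable ℝ g) :
    deriv (fun t => f t * ψ (g t))
      = fun t => deriv f t * ψ (g t) + f t * (deriv g t * deriv ψ (g t)) :=
  funext fun t =>
    ((hf t).hasDerivAt.mul ((hψ (g t)).hasDerivAt.comp_real (hg t).hasDerivAt)).deriv

theorem deriv_deriv_mul_comp_real {f ψ : ℝ → ℂ} {g : ℝ → ℝ} {x : ℝ}
    (hf : Differentiable ℝ f) (hψ : Differentiable ℝ ψ) (hg : Differentiable ℝ g)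
    (hf' : DifferentiableAt ℝ (deriv f) x) (hψ' : DifferentiableAt ℝ (deriv ψ) (g x))
    (hg' : DifferentiableAt ℝ (deriv g) x) :
    deriv (deriv (fun t => f t * ψ (g t))) x
      = deriv (deriv f) x * ψ (g x)
        + (2 * deriv f x * (deriv g x : ℝ) + f x * (deriv (deriv g) x : ℝ)) * deriv ψ (g x)
        + f x * ((deriv g x : ℝ) : ℂ) ^ 2 * deriv (deriv ψ) (g x) := by
  have hψg := (hψ (g x)).hasDerivAt.comp_real (hg x).hasDerivAt
  have hψ'g := hψ'.hasDerivAt.comp_real (hg x).hasDerivAt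
  rw [deriv_mul_comp_real hf hψ hg]
  refine (((hf'.hasDerivAt.mul hψg).add
    ((hf x).hasDerivAt.mul (hg'.hasDerivAt.ofReal_comp.fun_mul hψ'g))).deriv).trans ?_
  ring

/-- Langer's transformation: if `ψ` solves `ε ψ'' = B ψ`, the phase `g` solves
`B(g) g'² = C` and the amplitude `f` solves `2 f' g' + f g'' = 0`, then
`φ = f · (ψ ∘ g)` satisfies `-ε φ'' + C φ = -ε f'' (ψ ∘ g)`. -/
theorem langer_transformation
    (ε : ℂ) (B C : ℝ → ℂ) (g : ℝ → ℝ) (f ψ : ℝ → ℂ)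
    (hg : Differentiable ℝ g) (hg' : Differentiable ℝ (deriv g))
    (hf : Differentiable ℝ f) (hf' : Differentiable ℝ (deriv f))
    (hψ : Differentiable ℝ ψ) (hψ' : Differentiable ℝ (deriv ψ))
    (hAiry : ∀ y : ℝ, ε * deriv (deriv ψ) y = B y * ψ y)
    (hphase : ∀ x : ℝ, B (g x) * (Complex.ofReal (deriv g x)) ^ 2 = C x)
    (hamp : ∀ x : ℝ, 2 * deriv f x * Complex.ofReal (deriv g x) + f x * Complex.ofReal (deriv (deriv g) x) = 0) :
    ∀ x : ℝ,
      -ε * deriv (deriv (fun t => f t * ψ (g t))) x + C x * (f x * ψ (g x))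
        = -ε * deriv (deriv f) x * ψ (g x) := by
  intro x
  rw [deriv_deriv_mul_comp_real hf hψ hg (hf' x) (hψ' (g x)) (hg' x)]
  linear_combination (-ε * deriv ψ (g x)) * hamp x
    - (f x * ((deriv g x : ℝ) : ℂ) ^ 2) * hAiry (g x) - (f x * ψ (g x)) * hphase x
end

section
/- Let U : [0,∞) → ℂ be twice differentiable with U(x) ≠ c for all x ≥ 0, where c ∈ ℂ, and let α ∈ ℂ. Let φ₁, φ₂ : [0,∞) → ℂ be twice differentiable with (U − c) φ_j'' − U'' φ_j = 0 for j = 1,2 and φ₁ φ₂' − φ₁' φ₂ ≡ 1. Let f : [0,∞) → ℂ be continuous and suppose x ↦ e^{α x} φ₁(x) f(x)/(U(x) − c) and x ↦ e^{α x} φ₂(x) f(x)/(U(x) − c) are integrable on [0,∞). Define u_α(z) := −φ₁(z) e^{−α z} ∫₀^z e^{α x} φ₂(x) f(x)/(U(x) − c) dx − φ₂(z) e^{−α z} ∫_z^∞ e^{α x} φ₁(x) f(x)/(U(x) − c) dx. Then for all z ≥ 0, Ray_α(u_α)(z) = f(z) + Err(z), where Ray_α(ψ) := (U − c)(ψ''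 − α² ψ) − U'' ψ and Err(z) := 2 α (U(z) − c) ( φ₁'(z) e^{−α z} ∫₀^z e^{α x} φ₂(x) f(x)/(U(x) − c) dx + φ₂'(z) e^{−α z} ∫_z^∞ e^{α x} φ₁(x) f(x)/(U(x) − c) dx ). -/
/-!
Write the candidate solution as `u = e^{-α z} v` with `v = -(φ₁ I + φ₂ J)`, where `I' = φ₂ g`,
`J' = -φ₁ g` and `g = e^{α x} f / (U - c)`. In `v'` the terms carrying `I'` and `J'` cancel, so
`v' = -(φ₁' I + φ₂' J)`; in `v''` they contribute the Wronskian times `g`, so `Ray₀ v = e^{α z} f`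
(variation of parameters with the weighted right-hand side). Conjugating by the exponential,
`(e^{-α z} v)'' - α² e^{-α z} v = e^{-α z} (v'' - 2 α v')`, and `-2 α v'` is the error term.
-/

open MeasureTheory Set

/-- One-sided derivative on the half line `[0, ∞)`. -/
noncomputable def dHalf (f : ℝ → ℂ) : ℝ → ℂ := derivWithin f (Set.Ici 0)

section HalfLine

variable {E : Type*} [NormedAddCommGroup E] [NormedSpace ℝ E] [CompleteSpace E]
  {h : ℝ → E} {a b : ℝ}

theorem hasDerivWithinAt_intervalIntegral_Ici (hcont : ContinuousOn h (Ici a)) (hb : b ∈ Ici a) :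
    HasDerivWithinAt (fun u => ∫ x in a..u, h x) (h b) (Ici a) b := by
  have hmeas := hcont.stronglyMeasurableAtFilter_nhdsWithin measurableSet_Ici b (μ := volume)
  rcases eq_or_lt_of_le (mem_Ici.mp hb) with rfl | hab
  · exact intervalIntegral.integral_hasDerivWithinAt_right (t := Ioi a) .refl
      (hmeas.filter_mono (nhdsWithin_mono _ Ioi_subset_Ici_self))
      ((hcont a hb).mono Ioi_subset_Ici_self)
  · rw [nhdsWithin_eq_nhds.mpr (Ici_mem_nhds hab)] at hmeas
    exact (intervalIntegral.integral_hasDerivAt_right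
      ((hcont.mono Icc_subset_Ici_self).intervalIntegrable_of_Icc hab.le) hmeas
      (hcont.continuousAt (Ici_mem_nhds hab))).hasDerivWithinAt

theorem hasDerivWithinAt_setIntegral_Ioi (hcont : ContinuousOn h (Ici a))
    (hint : IntegrableOn h (Ioi a)) (hb : b ∈ Ici a) :
    HasDerivWithinAt (fun u => ∫ x in Ioi u, h x) (-h b) (Ici a) b := by
  have htail : ∀ u ∈ Ici a, ∫ x in Ioi u, h x = (∫ x in Ioi a, h x) - ∫ x in a..u, h x :=
    fun u hu => (sub_eq_of_eq_add' (intervalIntegral.integral_interval_add_Ioi hint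
      (hint.mono_set (Ioi_subset_Ioi hu))).symm).symm
  exact ((hasDerivWithinAt_intervalIntegral_Ici hcont hb).const_sub _).congr htail (htail b hb)

end HalfLine

noncomputable def rayleigh (s : Set ℝ) (U : ℝ → ℂ) (c α : ℂ) (ψ : ℝ → ℂ) (z : ℝ) : ℂ :=
  (U z - c) * (derivWithin (derivWithin ψ s) s z - α ^ 2 * ψ z)
    - derivWithin (derivWithin U s) s z * ψ z

section Green

variable {s : Set ℝ} {z : ℝ}

theorem hasDerivWithinAt_mul_add_mul_of_primitives {a₁ a₂ I J : ℝ → ℂ} {a₁' a₂' p₁ p₂ g : ℂ}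
    (h₁ : HasDerivWithinAt a₁ a₁' s z) (h₂ : HasDerivWithinAt a₂ a₂' s z)
    (hI : HasDerivWithinAt I (p₂ * g) s z) (hJ : HasDerivWithinAt J (-(p₁ * g)) s z) :
    HasDerivWithinAt (fun x => a₁ x * I x + a₂ x * J x)
      (a₁' * I z + a₂' * J z + (a₁ z * p₂ - a₂ z * p₁) * g) s z :=
  ((h₁.mul hI).add (h₂.mul hJ)).congr_deriv (by ring)

theorem derivWithin_derivWithin_cexp_mul (hs : UniqueDiffOn ℝ s) (hz : z ∈ s) (β : ℂ)
    {w w' : ℝ → ℂ} {w'' : ℂ} (hw : ∀ x ∈ s, HasDerivWithinAt w (w' x) s x)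
    (hw' : HasDerivWithinAt w' w'' s z) :
    derivWithin (derivWithin (fun x : ℝ => Complex.exp (β * x) * w x) s) s z
      = Complex.exp (β * z) * (w'' + 2 * β * w' z + β ^ 2 * w z) := by
  have hexp (x : ℝ) : HasDerivWithinAt (fun x : ℝ => Complex.exp (β * x))
      (β * Complex.exp (β * x)) s x := by
    simpa [mul_comm] using
      (((Complex.ofRealCLM.hasDerivAt (x := x)).const_mul β).cexp).hasDerivWithinAt
  have hfirst : ∀ x ∈ s, derivWithin (fun x : ℝ => Complex.exp (β * x) * w x) s x
      = β * Complex.exp (β * x) * w x + Complex.exp (β * x) * w' x :=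
    fun x hx => ((hexp x).mul (hw x hx)).derivWithin (hs x hx)
  rw [derivWithin_congr hfirst (hfirst z hz)]
  exact ((((hexp z).const_mul β).mul (hw z hz)).add ((hexp z).mul hw')).derivWithin (hs z hz)
    |>.trans (by ring)

theorem rayleigh_greenSolution {U φ₁ φ₂ f I J : ℝ → ℂ} {c α : ℂ}
    (hs : UniqueDiffOn ℝ s) (hz : z ∈ s) (hUc : U z ≠ c)
    (hφ₁ : DifferentiableOn ℝ φ₁ s) (hφ₂ : DifferentiableOn ℝ φ₂ s)
    (hφ₁' : DifferentiableWithinAt ℝ (derivWithin φ₁ s) s z)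
    (hφ₂' : DifferentiableWithinAt ℝ (derivWithin φ₂ s) s z)
    (hode₁ : (U z - c) * derivWithin (derivWithin φ₁ s) s z
      - derivWithin (derivWithin U s) s z * φ₁ z = 0)
    (hode₂ : (U z - c) * derivWithin (derivWithin φ₂ s) s z
      - derivWithin (derivWithin U s) s z * φ₂ z = 0)
    (hW : φ₁ z * derivWithin φ₂ s z - derivWithin φ₁ s z * φ₂ z = 1)
    (hI : ∀ x ∈ s, HasDerivWithinAt I (Complex.exp (α * x) * φ₂ x * f x / (U x - c)) s x)
    (hJ : ∀ x ∈ s, HasDerivWithinAt J (-(Complex.exp (α * x) * φ₁ x * f x / (U x - c))) s x) :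
    rayleigh s U c α
        (fun t => -φ₁ t * Complex.exp (-α * t) * I t - φ₂ t * Complex.exp (-α * t) * J t) z
      = f z + 2 * α * (U z - c) * (derivWithin φ₁ s z * Complex.exp (-α * z) * I z
          + derivWithin φ₂ s z * Complex.exp (-α * z) * J z) := by
  set g : ℝ → ℂ := fun x => Complex.exp (α * x) * f x / (U x - c)
  have hI' (x) (hx : x ∈ s) : HasDerivWithinAt I (φ₂ x * g x) s x :=
    (hI x hx).congr_deriv (by ring)
  have hJ' (x) (hx : x ∈ s) : HasDerivWithinAt J (-(φ₁ x * g x)) s x :=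
    (hJ x hx).congr_deriv (by ring)
  have hv (x) (hx : x ∈ s) : HasDerivWithinAt (fun t => -(φ₁ t * I t + φ₂ t * J t))
      (-(derivWithin φ₁ s x * I x + derivWithin φ₂ s x * J x)) s x :=
    (hasDerivWithinAt_mul_add_mul_of_primitives (hφ₁ x hx).hasDerivWithinAt
      (hφ₂ x hx).hasDerivWithinAt (hI' x hx) (hJ' x hx)).neg.congr_deriv (by ring)
  have hv' : HasDerivWithinAt (fun t => -(derivWithin φ₁ s t * I t + derivWithin φ₂ s t * J t))
      (-(derivWithin (derivWithin φ₁ s) s z * I z + derivWithin (derivWithin φ₂ s) s z * J z)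
        + g z) s z :=
    (hasDerivWithinAt_mul_add_mul_of_primitives hφ₁'.hasDerivWithinAt hφ₂'.hasDerivWithinAt
      (hI' z hz) (hJ' z hz)).neg.congr_deriv (by linear_combination g z * hW)
  have hu : (fun t => -φ₁ t * Complex.exp (-α * t) * I t - φ₂ t * Complex.exp (-α * t) * J t)
      = fun t : ℝ => Complex.exp (-α * t) * -(φ₁ t * I t + φ₂ t * J t) := by
    funext t; ring
  have hfg : (U z - c) * Complex.exp (-α * z) * g z = f z := by
    simp only [g, neg_mul, Complex.exp_neg]
    field_simp [sub_ne_zero.mpr hUc]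
  rw [rayleigh, hu, derivWithin_derivWithin_cexp_mul hs hz (-α) hv hv']
  linear_combination (-(Complex.exp (-α * z) * I z)) * hode₁
    - Complex.exp (-α * z) * J z * hode₂ + hfg

end Green

theorem raySolver_alpha_approximate_general
    (U φ₁ φ₂ f : ℝ → ℂ) (c α : ℂ)
    (hUc : ∀ x ∈ Set.Ici (0:ℝ), U x ≠ c)
    (hU : DifferentiableOn ℝ U (Set.Ici 0))
    (hφ₁ : DifferentiableOn ℝ φ₁ (Set.Ici 0))
    (hφ₁' : DifferentiableOn ℝ (dHalf φ₁) (Set.Ici 0))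
    (hφ₂ : DifferentiableOn ℝ φ₂ (Set.Ici 0))
    (hφ₂' : DifferentiableOn ℝ (dHalf φ₂) (Set.Ici 0))
    (hode₁ : ∀ z ∈ Set.Ici (0:ℝ),
      (U z - c) * dHalf (dHalf φ₁) z - dHalf (dHalf U) z * φ₁ z = 0)
    (hode₂ : ∀ z ∈ Set.Ici (0:ℝ),
      (U z - c) * dHalf (dHalf φ₂) z - dHalf (dHalf U) z * φ₂ z = 0)
    (hW : ∀ z ∈ Set.Ici (0:ℝ), φ₁ z * dHalf φ₂ z - dHalf φ₁ z * φ₂ z = 1)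
    (hf : ContinuousOn f (Set.Ici 0))
    (hint₁ : IntegrableOn
      (fun x : ℝ => Complex.exp (α * x) * φ₁ x * f x / (U x - c)) (Set.Ici 0)) :
    ∀ z ∈ Set.Ici (0:ℝ),
      (U z - c)
          * (dHalf (dHalf (fun t =>
              -φ₁ t * Complex.exp (-α * t)
                  * (∫ x in (0:ℝ)..t, Complex.exp (α * x) * φ₂ x * f x / (U x - c))
                - φ₂ t * Complex.exp (-α * t)
                  * ∫ x in Set.Ioi t, Complex.exp (α * x) * φ₁ x * f x / (U x - c))) z
            - α ^ 2
              * (-φ₁ z * Complex.exp (-α * z)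
                  * (∫ x in (0:ℝ)..z, Complex.exp (α * x) * φ₂ x * f x / (U x - c))
                - φ₂ z * Complex.exp (-α * z)
                  * ∫ x in Set.Ioi z, Complex.exp (α * x) * φ₁ x * f x / (U x - c)))
        - dHalf (dHalf U) z
            * (-φ₁ z * Complex.exp (-α * z)
                * (∫ x in (0:ℝ)..z, Complex.exp (α * x) * φ₂ x * f x / (U x - c))
              - φ₂ z * Complex.exp (-α * z)
                * ∫ x in Set.Ioi z, Complex.exp (α * x) * φ₁ x * f x / (U x - c))
      = f z
        + 2 * α * (U z - c)
            * (dHalf φ₁ z * Complex.exp (-α * z)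
                * (∫ x in (0:ℝ)..z, Complex.exp (α * x) * φ₂ x * f x / (U x - c))
              + dHalf φ₂ z * Complex.exp (-α * z)
                * ∫ x in Set.Ioi z, Complex.exp (α * x) * φ₁ x * f x / (U x - c)) := by
  intro z hz
  have hweighted {φ : ℝ → ℂ} (hφ : ContinuousOn φ (Ici 0)) :
      ContinuousOn (fun x : ℝ => Complex.exp (α * x) * φ x * f x / (U x - c)) (Ici 0) :=
    (((by fun_prop : Continuous fun x : ℝ => Complex.exp (α * x)).continuousOn.mul hφ).mul hf).div
      (hU.continuousOn.sub continuousOn_const) fun x hx => sub_ne_zero.mpr (hUc x hx)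
  exact rayleigh_greenSolution (uniqueDiffOn_Ici 0) hz (hUc z hz) hφ₁ hφ₂ (hφ₁' z hz) (hφ₂' z hz)
    (hode₁ z hz) (hode₂ z hz) (hW z hz)
    (fun x hx => hasDerivWithinAt_intervalIntegral_Ici (hweighted hφ₂.continuousOn) hx)
    (fun x hx => hasDerivWithinAt_setIntegral_Ioi (hweighted hφ₁.continuousOn)
      (hint₁.mono_set Ioi_subset_Ici_self) hx)

/-- The approximate Rayleigh solver for `α ≠ 0`:
`Ray_α(u_α) = f + Err` where `u_α` is built from the exponentially weighted Green
kernel `e^{-α(z-x)} G_{R,0}(x,z)` and the error is of order `O(α)`. -/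
theorem raySolver_alpha_approximate
    (U φ₁ φ₂ f : ℝ → ℂ) (c α : ℂ)
    (hUc : ∀ x ∈ Set.Ici (0:ℝ), U x ≠ c)
    (hU : DifferentiableOn ℝ U (Set.Ici 0))
    (hU' : DifferentiableOn ℝ (dHalf U) (Set.Ici 0))
    (hφ₁ : DifferentiableOn ℝ φ₁ (Set.Ici 0))
    (hφ₁' : DifferentiableOn ℝ (dHalf φ₁) (Set.Ici 0))
    (hφ₂ : DifferentiableOn ℝ φ₂ (Set.Ici 0))
    (hφ₂' : DifferentiableOn ℝ (dHalf φ₂) (Set.Ici 0))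
    (hode₁ : ∀ z ∈ Set.Ici (0:ℝ),
      (U z - c) * dHalf (dHalf φ₁) z - dHalf (dHalf U) z * φ₁ z = 0)
    (hode₂ : ∀ z ∈ Set.Ici (0:ℝ),
      (U z - c) * dHalf (dHalf φ₂) z - dHalf (dHalf U) z * φ₂ z = 0)
    (hW : ∀ z ∈ Set.Ici (0:ℝ), φ₁ z * dHalf φ₂ z - dHalf φ₁ z * φ₂ z = 1)
    (hf : ContinuousOn f (Set.Ici 0))
    (hint₁ : IntegrableOn
      (fun x : ℝ => Complex.exp (α * x) * φ₁ x * f x / (U x - c)) (Set.Ici 0))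
    (hint₂ : IntegrableOn
      (fun x : ℝ => Complex.exp (α * x) * φ₂ x * f x / (U x - c)) (Set.Ici 0)) :
    ∀ z ∈ Set.Ici (0:ℝ),
      (U z - c)
          * (dHalf (dHalf (fun t =>
              -φ₁ t * Complex.exp (-α * t)
                  * (∫ x in (0:ℝ)..t, Complex.exp (α * x) * φ₂ x * f x / (U x - c))
                - φ₂ t * Complex.exp (-α * t)
                  * ∫ x in Set.Ioi t, Complex.exp (α * x) * φ₁ x * f x / (U x - c))) z
            - α ^ 2
              * (-φ₁ z * Complex.exp (-α * z)
                  * (∫ x in (0:ℝ)..z, Complex.exp (α * x) * φ₂ x * f x / (U x - c))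
                - φ₂ z * Complex.exp (-α * z)
                  * ∫ x in Set.Ioi z, Complex.exp (α * x) * φ₁ x * f x / (U x - c)))
        - dHalf (dHalf U) z
            * (-φ₁ z * Complex.exp (-α * z)
                * (∫ x in (0:ℝ)..z, Complex.exp (α * x) * φ₂ x * f x / (U x - c))
              - φ₂ z * Complex.exp (-α * z)
                * ∫ x in Set.Ioi z, Complex.exp (α * x) * φ₁ x * f x / (U x - c))
      = f z
        + 2 * α * (U z - c)
            * (dHalf φ₁ z * Complex.exp (-α * z)
                * (∫ x in (0:ℝ)..z, Complex.exp (α * x) * φ₂ x * f x / (U x - c))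
              + dHalf φ₂ z * Complex.exp (-α * z)
                * ∫ x in Set.Ioi z, Complex.exp (α * x) * φ₁ x * f x / (U x - c)) :=
  raySolver_alpha_approximate_general U φ₁ φ₂ f c α hUc hU hφ₁ hφ₁' hφ₂ hφ₂' hode₁ hode₂ hW hf hint₁
end
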